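/- arXiv:2407.10092 — 2 statements merged into one kernel-verified Lean document; each statement's English description precedes it below -/
import Mathlib

section
/- Let n > 2 be a prime, and let C'₁ = C(π/2) and C'₂ = V C(2π/n) Vᵀ in SO(3), where V is the rotation sending e₁ to −e₂ given by V = [[0,1,0],[−1,0,0],[0,0,1]]. Then every eigenvalue ζ of C'₁ C'₂ other than 1 has the form ζ = exp(i ψ π) for some irrational real ψ. -/
/-!
An eigenvalue `ζ ≠ 1` of the product is a root of `z² - (c - 1) z + 1` with `c = cos (2π/n)`.
Since `|c - 1| < 2` the two roots are conjugate and of modulus one, so `ζ = exp (i ψ π)` with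
`ψ = arg ζ / π`. If `ψ` were rational, `ζ` would be a root of unity, hence an algebraic integer, and
so would be `c = ζ + ζ⁻¹ + 1`. But for odd `n` and `η = exp (2πi/n)`, `1 + η` is a unit of `ℤ[η]`
and `(1 + η)² = 2η(1 + c)`, so `1/2` would be an algebraic integer.
-/

open Matrix

/-- rotation by angle θ about the first coordinate axis -/
noncomputable def Cmat (θ : ℝ) : Matrix (Fin 3) (Fin 3) ℝ :=
  !![1, 0, 0; 0, Real.cos θ, -Real.sin θ; 0, Real.sin θ, Real.cos θ]

def Vmat : Matrix (Fin 3) (Fin 3) ℝ := !![0, 1, 0; -1, 0, 0; 0, 0, 1]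

open Real Finset

namespace IsPrimitiveRoot

variable {K : Type*} [Field K] {η : K} {n : ℕ}

theorem one_add_mul_geom_sum_sq_eq_one (hη : IsPrimitiveRoot η n) (h1 : 1 < n) {m : ℕ}
    (hm : n + 1 = 2 * m) : (1 + η) * ∑ j ∈ range m, (η ^ 2) ^ j = 1 := by
  have hgeom := mul_geom_sum (η ^ 2) m
  have hpow : (η ^ 2) ^ m = η := by rw [← pow_mul, ← hm, pow_succ, hη.pow_eq_one, one_mul]
  rw [hpow] at hgeom
  refine mul_left_cancel₀ (sub_ne_zero.mpr (hη.ne_one h1)) ?_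
  linear_combination hgeom

theorem not_isIntegral_add_inv_div_two [CharZero K] (hη : IsPrimitiveRoot η n) (hn : Odd n)
    (h1 : 1 < n) : ¬ IsIntegral ℤ ((η + η⁻¹) / 2) := by
  intro hc
  obtain ⟨m, hm⟩ := hn
  set w := ∑ j ∈ range (m + 1), (η ^ 2) ^ j
  have hw : (1 + η) * w = 1 := hη.one_add_mul_geom_sum_sq_eq_one h1 (by omega)
  have hη0 : η ≠ 0 := hη.ne_zero (by omega)
  have half : ((1 / 2 : ℚ) : K) = η * w ^ 2 * (1 + (η + η⁻¹) / 2) := by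
    field_simp
    linear_combination (-(η + 1) * w - 1) * hw
  have hint : IsIntegral ℤ ((1 / 2 : ℚ) : K) := by
    have hηint := hη.isIntegral (by omega)
    rw [half]
    exact (hηint.mul ((IsIntegral.sum _ fun j _ => (hηint.pow 2).pow j).pow 2)).mul
      (isIntegral_one.add hc)
  obtain ⟨k, hk⟩ := IsIntegrallyClosed.isIntegral_iff.mp (IsIntegral.ratCast_iff.mp hint)
  have hk2 : (2 : ℚ) * k = 1 := by rw [← eq_intCast (algebraMap ℤ ℚ), hk]; norm_num
  norm_cast at hk2
  omega

end IsPrimitiveRoot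

namespace Complex

theorem not_isIntegral_cos_two_pi_div {n : ℕ} (hn : Odd n) (h1 : 1 < n) :
    ¬ IsIntegral ℤ (cos (2 * π / n)) := by
  have hcos : cos (2 * π / n) = (exp (2 * π * I / n) + (exp (2 * π * I / n))⁻¹) / 2 := by
    rw [cos.eq_1, ← exp_neg]
    ring_nf
  rw [hcos]
  exact (isPrimitiveRoot_exp n (by omega)).not_isIntegral_add_inv_div_two hn h1

theorem isIntegral_of_exp_rat_mul_pi_mul_I_sq_sub_mul_add_one_eq_zero {b : ℂ} (q : ℚ)
    (h : exp (q * π * I) ^ 2 - b * exp (q * π * I) + 1 = 0) : IsIntegral ℤ b := by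
  have hb : b = 2 * cos (q * π) := by
    rw [cos.eq_1, mul_div_cancel₀ _ two_ne_zero, neg_mul, exp_neg]
    field_simp [exp_ne_zero]
    linear_combination -h
  exact hb ▸ isIntegral_two_mul_cos_rat_mul_pi q

theorem norm_eq_one_of_sq_sub_mul_add_one_eq_zero {b : ℝ} (hb : |b| < 2) {z : ℂ}
    (hz : z ^ 2 - b * z + 1 = 0) : ‖z‖ = 1 := by
  have hre := congrArg re hz
  have him := congrArg im hz
  simp only [sub_re, add_re, sub_im, add_im, pow_two, mul_re, mul_im, ofReal_re, ofReal_im,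
    one_re, one_im, zero_re, zero_im] at hre him
  have him_ne : z.im ≠ 0 := by
    intro h0
    rw [h0] at hre
    nlinarith [sq_nonneg (2 * z.re - b), abs_lt.mp hb]
  have hre_eq : 2 * z.re = b := by
    apply mul_right_cancel₀ him_ne
    linear_combination him
  rw [← pow_eq_one_iff_of_nonneg (norm_nonneg z) two_ne_zero, Complex.sq_norm, normSq_apply]
  linear_combination -hre + z.re * hre_eq

end Complex

theorem Cmat_pi_div_two_mul_conj_Vmat (θ : ℝ) :
    Cmat (π / 2) * (Vmat * Cmat θ * Vmatᵀ) = !![cos θ, 0, -sin θ; -sin θ, 0, -cos θ; 0, 1, 0] := by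
  have hVt : Vmatᵀ = !![0, -1, 0; 1, 0, 0; 0, 0, 1] := by
    ext i j
    fin_cases i <;> fin_cases j <;> rfl
  rw [hVt, Cmat, Cmat, Vmat]
  simp

theorem sq_sub_mul_add_one_eq_zero_of_eigenvalue (θ : ℝ) {ζ : ℂ} (hζ : ζ ≠ 1)
    {v : Fin 3 → ℂ} (hv0 : v ≠ 0)
    (hv : (Cmat (π / 2) * (Vmat * Cmat θ * Vmatᵀ)).map Complex.ofReal *ᵥ v = ζ • v) :
    ζ ^ 2 - ((cos θ - 1 : ℝ) : ℂ) * ζ + 1 = 0 := by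
  rw [Cmat_pi_div_two_mul_conj_Vmat] at hv
  set M := (!![cos θ, 0, -sin θ; -sin θ, 0, -cos θ; 0, 1, 0]).map Complex.ofReal
  have hdet : (M - ζ • 1).det = 0 := by
    rw [← exists_mulVec_eq_zero_iff]
    exact ⟨v, hv0, by rw [sub_mulVec, hv, smul_mulVec, one_mulVec, sub_self]⟩
  have hcharpoly : (M - ζ • 1).det = -(ζ - 1) * (ζ ^ 2 - ((cos θ - 1 : ℝ) : ℂ) * ζ + 1) := by
    simp only [M, det_fin_three, Matrix.sub_apply, map_apply, of_apply, cons_val', cons_val_zero,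
      cons_val_fin_one, Complex.ofReal_cos, Matrix.smul_apply, one_apply, ↓reduceIte, smul_eq_mul,
      mul_one, cons_val_one, Complex.ofReal_zero, zero_sub, mul_neg, Matrix.cons_val, neg_mul,
      neg_neg, Complex.ofReal_neg, Fin.reduceEq, mul_zero, sub_zero, Complex.ofReal_one,
      sub_neg_eq_add, zero_ne_one, sub_self, Complex.ofReal_sin, one_ne_zero, zero_mul, neg_zero,
      add_zero, neg_sub, Complex.ofReal_sub]
    linear_combination Complex.sin_sq_add_cos_sq (θ : ℂ)
  rw [hcharpoly] at hdet
  exact (mul_eq_zero.mp hdet).resolve_left (neg_ne_zero.mpr (sub_ne_zero.mpr hζ))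

theorem Real.neg_one_lt_cos_two_pi_div {n : ℕ} (hn : 2 < n) : -1 < cos (2 * π / n) := by
  have hn' : (2 : ℝ) < n := by exact_mod_cast hn
  rw [← cos_pi]
  apply cos_lt_cos_of_nonneg_of_le_pi (by positivity) le_rfl
  rw [div_lt_iff₀ (by linarith)]
  nlinarith [pi_pos]

/-- for a prime n > 2, every eigenvalue ζ ≠ 1 of
C(π/2) · V C(2π/n) Vᵀ has the form exp(iψπ) with ψ irrational. -/
theorem eigenvalue_irrational_angle (n : ℕ) (hn : n.Prime) (h2 : 2 < n) :
    ∀ ζ : ℂ, ζ ≠ 1 →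
      (∃ v : Fin 3 → ℂ, v ≠ 0 ∧
        ((Cmat (Real.pi / 2) * (Vmat * Cmat (2 * Real.pi / n) * Vmatᵀ)).map
          Complex.ofReal).mulVec v = ζ • v) →
      ∃ ψ : ℝ, Irrational ψ ∧ ζ = Complex.exp (((ψ * Real.pi : ℝ) : ℂ) * Complex.I) := by
  rintro ζ hζ1 ⟨v, hv0, hv⟩
  have hquad := sq_sub_mul_add_one_eq_zero_of_eigenvalue _ hζ1 hv0 hv
  have hnorm : ‖ζ‖ = 1 := Complex.norm_eq_one_of_sq_sub_mul_add_one_eq_zero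
    (abs_lt.mpr ⟨by linarith [neg_one_lt_cos_two_pi_div h2], by linarith [cos_le_one (2 * π / n)]⟩)
    hquad
  have hexp : ζ = Complex.exp (((ζ.arg / π * π : ℝ) : ℂ) * Complex.I) := by
    rw [div_mul_cancel₀ _ pi_ne_zero]
    conv_lhs => rw [← Complex.norm_mul_exp_arg_mul_I ζ, hnorm]
    simp
  refine ⟨ζ.arg / π, ?_, hexp⟩
  rintro ⟨q, hq⟩
  rw [← hq] at hexp
  push_cast at hexp hquad
  have hb := Complex.isIntegral_of_exp_rat_mul_pi_mul_I_sq_sub_mul_add_one_eq_zero q (hexp ▸ hquad)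
  have hcos : IsIntegral ℤ (Complex.cos (2 * π / n)) := by simpa using hb.add isIntegral_one
  exact Complex.not_isIntegral_cos_two_pi_div (hn.odd_of_ne_two h2.ne') (by omega) hcos
end

section
/- Let G ⊆ SO(3) × SO(3) be a subgroup that is dense in SO(3) × SO(3), and let G̃ ⊆ SO(4) be a subgroup whose image under the double covering π : SO(4) → SO(3) × SO(3) is G. Then G̃ is dense in SO(4). -/
/-!
The preimage of `G` under `π` is `G̃ · ker π`, which is dense because `π` is open. The closure `K`
of `G̃` is a closed subgroup, and `K · ker π` is closed (as `ker π = {±1}` is finite) and dense,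
so it is everything; hence `K` has finite index and is therefore open as well as closed. An
open subgroup contains the identity component, and `-1` lies in it, being joined to `1` by the
path `t ↦ diag(R(t), R(t))` of rotations. So `K` contains `ker π`, and `K = K · ker π = SO(4)`.
-/

/-- SO(n) as a subgroup of the orthogonal group O(n). -/
def SOsub (n : ℕ) : Subgroup ↥(Matrix.orthogonalGroup (Fin n) ℝ) where
  carrier := {A | (A : Matrix (Fin n) (Fin n) ℝ).det = 1}
  one_mem' := by simp
  mul_mem' := by
    intro a b ha hb
    simp only [Set.mem_setOf_eq] at *
    have h : ((a * b : ↥(Matrix.orthogonalGroup (Fin n) ℝ)) : Matrix (Fin n) (Fin n) ℝ)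
        = (a : Matrix (Fin n) (Fin n) ℝ) * (b : Matrix (Fin n) (Fin n) ℝ) := rfl
    rw [h, Matrix.det_mul, ha, hb, mul_one]
  inv_mem' := by
    intro a ha
    simp only [Set.mem_setOf_eq] at *
    show ((a⁻¹ : ↥(Matrix.orthogonalGroup (Fin n) ℝ)) : Matrix (Fin n) (Fin n) ℝ).det = 1
    have h : ((a⁻¹ : ↥(Matrix.orthogonalGroup (Fin n) ℝ)) : Matrix (Fin n) (Fin n) ℝ)
        = star (a : Matrix (Fin n) (Fin n) ℝ) := rfl
    rw [h, Matrix.star_eq_conjTranspose, Matrix.det_conjTranspose]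
    simpa using ha

open Matrix Real Pointwise

section TopologicalGroup

variable {H : Type*} [Group H] [TopologicalSpace H] [IsTopologicalGroup H]

theorem Subgroup.isOpen_of_isClosed_of_sup_eq_top {K N : Subgroup H} [N.Normal] [Finite N]
    (hK : IsClosed (K : Set H)) (hKN : N ⊔ K = ⊤) : IsOpen (K : Set H) := by
  have : Finite (H ⧸ K) := by
    refine Finite.of_surjective (fun n : N => (n : H ⧸ K)) fun x => ?_
    induction x using QuotientGroup.induction_on with | H x => ?_
    obtain ⟨n, hn, k, hk, rfl⟩ : x ∈ (N : Set H) * (K : Set H) := by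
      rw [← Subgroup.normal_mul, hKN]; trivial
    exact ⟨⟨n, hn⟩, QuotientGroup.eq.mpr (by simpa using hk)⟩
  have := Subgroup.finiteIndex_of_finite_quotient (H := K)
  exact K.isOpen_of_isClosed_of_finiteIndex hK

variable {H' : Type*} [Group H'] [TopologicalSpace H']

theorem Subgroup.dense_of_dense_map {f : H →* H'} (hf : IsOpenMap f)
    (hfin : (f.ker : Set H).Finite) (hconn : (f.ker : Set H) ⊆ connectedComponent 1) {L : Subgroup H}
    (hL : Dense (L.map f : Set H')) : Dense (L : Set H) := by
  set K := L.topologicalClosure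
  have hKclosed : IsClosed (K : Set H) := L.isClosed_topologicalClosure
  have : Finite f.ker := hfin
  have hKN : f.ker ⊔ K = ⊤ := by
    have hdense : Dense ((f.ker ⊔ L : Subgroup H) : Set H) := by
      rw [sup_comm, ← Subgroup.comap_map_eq]; exact hL.preimage hf
    have hclosed : IsClosed ((f.ker ⊔ K : Subgroup H) : Set H) := by
      rw [Subgroup.normal_mul]; exact hKclosed.mul_left_of_isCompact hfin.isCompact
    rw [← SetLike.coe_set_eq, Subgroup.coe_top, ← hclosed.closure_eq]
    exact (hdense.mono (sup_le_sup_left L.le_topologicalClosure _)).closure_eq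
  have hNK : f.ker ≤ K := hconn.trans <| IsClopen.connectedComponent_subset
    ⟨hKclosed, Subgroup.isOpen_of_isClosed_of_sup_eq_top hKclosed hKN⟩ K.one_mem
  rw [sup_eq_right.mpr hNK] at hKN
  rw [dense_iff_closure_eq, ← L.topologicalClosure_coe]
  exact (congrArg SetLike.coe hKN).trans Subgroup.coe_top

end TopologicalGroup

theorem Matrix.reindex_mem_orthogonalGroup {n n' R : Type*} [Fintype n] [DecidableEq n]
    [Fintype n'] [DecidableEq n'] [CommRing R] (e : n ≃ n') {A : Matrix n n R}
    (hA : A ∈ orthogonalGroup n R) : reindex e e A ∈ orthogonalGroup n' R := by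
  rw [mem_orthogonalGroup_iff] at hA ⊢
  rw [transpose_reindex, reindex_apply, reindex_apply, submatrix_mul_equiv, hA,
    submatrix_one_equiv]

theorem Matrix.blockDiagonal_mem_orthogonalGroup {n o R : Type*} [Fintype n] [DecidableEq n]
    [Fintype o] [DecidableEq o] [CommRing R] {A : o → Matrix n n R}
    (hA : ∀ i, A i ∈ orthogonalGroup n R) : blockDiagonal A ∈ orthogonalGroup (n × o) R := by
  simp only [mem_orthogonalGroup_iff] at hA ⊢
  rw [blockDiagonal_transpose, ← blockDiagonal_mul]
  simp_rw [hA]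
  exact blockDiagonal_one

noncomputable def planeRotation (t : ℝ) : Matrix (Fin 2) (Fin 2) ℝ :=
  !![cos t, -sin t; sin t, cos t]

theorem planeRotation_mem_orthogonalGroup (t : ℝ) :
    planeRotation t ∈ orthogonalGroup (Fin 2) ℝ := by
  rw [mem_orthogonalGroup_iff, planeRotation]
  ext i j
  fin_cases i <;> fin_cases j <;> simp [mul_apply] <;> ring_nf <;> simp

theorem det_planeRotation (t : ℝ) : (planeRotation t).det = 1 := by
  rw [planeRotation, det_fin_two_of]
  nlinarith [sin_sq_add_cos_sq t]

theorem planeRotation_zero : planeRotation 0 = 1 := by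
  rw [planeRotation, one_fin_two]; simp

theorem planeRotation_pi : planeRotation π = -1 := by
  rw [planeRotation, one_fin_two]; simp

theorem continuous_planeRotation : Continuous planeRotation := by
  refine continuous_matrix fun i j => ?_
  fin_cases i <;> fin_cases j <;> simp [planeRotation] <;> fun_prop

noncomputable def blockRotation (m : ℕ) (t : ℝ) : ↥(SOsub (2 * m)) :=
  ⟨⟨reindex finProdFinEquiv finProdFinEquiv (blockDiagonal fun _ : Fin m => planeRotation t),
    reindex_mem_orthogonalGroup _ <| blockDiagonal_mem_orthogonalGroup fun _ =>
      planeRotation_mem_orthogonalGroup t⟩,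
    by simp [SOsub, det_blockDiagonal, det_planeRotation]⟩

theorem continuous_blockRotation (m : ℕ) : Continuous (blockRotation m) :=
  ((continuous_pi fun _ => continuous_planeRotation).matrix_blockDiagonal.matrix_reindex _ _
    |>.subtype_mk _).subtype_mk _

theorem blockRotation_zero (m : ℕ) : blockRotation m 0 = 1 := by
  ext : 2
  simp only [blockRotation, planeRotation_zero, ← Pi.one_def, blockDiagonal_one, reindex_apply,
    submatrix_one_equiv]
  rfl

theorem coe_blockRotation_pi (m : ℕ) :
    ((blockRotation m π : orthogonalGroup (Fin (2 * m)) ℝ) : Matrix (Fin (2 * m)) (Fin (2 * m)) ℝ)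
      = -1 := by
  simp only [blockRotation, planeRotation_pi, ← Pi.one_def, ← Pi.neg_def, blockDiagonal_neg,
    blockDiagonal_one, reindex_apply]
  exact congrArg Neg.neg (submatrix_one_equiv _)

theorem SOsub.mem_connectedComponent_one_of_coe_eq_neg_one {m : ℕ} {g : ↥(SOsub (2 * m))}
    (hg : ((g : orthogonalGroup (Fin (2 * m)) ℝ) : Matrix (Fin (2 * m)) (Fin (2 * m)) ℝ) = -1) :
    g ∈ connectedComponent 1 := by
  have hpath : blockRotation m '' Set.Icc 0 π ⊆ connectedComponent 1 :=
    (isPreconnected_Icc.image _ (continuous_blockRotation m).continuousOn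
      ).subset_connectedComponent ⟨0, ⟨le_rfl, pi_pos.le⟩, blockRotation_zero m⟩
  have hg : g = blockRotation m π := by
    ext : 2; rw [hg, coe_blockRotation_pi]
  exact hpath ⟨π, ⟨pi_pos.le, le_rfl⟩, hg.symm⟩

theorem dense_lift_SO4_general
    (π4 : ↥(SOsub 4) →* ↥(SOsub 3) × ↥(SOsub 3))
    (hopen : IsOpenMap π4)
    (hker : ∀ g : ↥(SOsub 4), π4 g = 1 ↔
      (((g : ↥(Matrix.orthogonalGroup (Fin 4) ℝ)) : Matrix (Fin 4) (Fin 4) ℝ)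
          = (1 : Matrix (Fin 4) (Fin 4) ℝ) ∨
        ((g : ↥(Matrix.orthogonalGroup (Fin 4) ℝ)) : Matrix (Fin 4) (Fin 4) ℝ)
          = (-1 : Matrix (Fin 4) (Fin 4) ℝ)))
    (G : Subgroup (↥(SOsub 3) × ↥(SOsub 3))) (hG : Dense (G : Set (↥(SOsub 3) × ↥(SOsub 3))))
    (Gt : Subgroup ↥(SOsub 4)) (him : Subgroup.map π4 Gt = G) :
    Dense (Gt : Set ↥(SOsub 4)) := by
  have hinj : Function.Injective fun g : ↥(SOsub 4) =>
      ((g : orthogonalGroup (Fin 4) ℝ) : Matrix (Fin 4) (Fin 4) ℝ) :=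
    Subtype.val_injective.comp Subtype.val_injective
  refine Subgroup.dense_of_dense_map hopen ?_ ?_ (him ▸ hG)
  · exact ((Set.toFinite {1, -1}).preimage hinj.injOn).subset fun g hg => (hker g).mp hg
  · intro g hg
    rcases (hker g).mp hg with h | h
    · obtain rfl : g = 1 := hinj h
      exact mem_connectedComponent
    · exact SOsub.mem_connectedComponent_one_of_coe_eq_neg_one (m := 2) h

/-- if π : SO(4) → SO(3) × SO(3) is the standard double covering
(continuous, open, surjective homomorphism with kernel {±I₄}), G ⊆ SO(3) × SO(3) is a
dense subgroup and the subgroup G̃ ⊆ SO(4) satisfies π(G̃) = G, then G̃ is dense in SO(4). -/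
theorem dense_lift_SO4
    (π4 : ↥(SOsub 4) →* ↥(SOsub 3) × ↥(SOsub 3))
    (hcont : Continuous π4) (hopen : IsOpenMap π4) (hsurj : Function.Surjective π4)
    (hker : ∀ g : ↥(SOsub 4), π4 g = 1 ↔
      (((g : ↥(Matrix.orthogonalGroup (Fin 4) ℝ)) : Matrix (Fin 4) (Fin 4) ℝ)
          = (1 : Matrix (Fin 4) (Fin 4) ℝ) ∨
        ((g : ↥(Matrix.orthogonalGroup (Fin 4) ℝ)) : Matrix (Fin 4) (Fin 4) ℝ)
          = (-1 : Matrix (Fin 4) (Fin 4) ℝ)))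
    (G : Subgroup (↥(SOsub 3) × ↥(SOsub 3))) (hG : Dense (G : Set (↥(SOsub 3) × ↥(SOsub 3))))
    (Gt : Subgroup ↥(SOsub 4)) (him : Subgroup.map π4 Gt = G) :
    Dense (Gt : Set ↥(SOsub 4)) :=
  dense_lift_SO4_general π4 hopen hker G hG Gt him
end
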